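/- Completeness upgrades the observed treatment bridge equation to the latent treatment bridge equation (treatment-bridge completeness step in the proof of Theorem 1): Assume (i) W ⫫ (Z, R) | (U, X); (ii) for every (u, x) with P(U = u, X = x) > 0, 0 < P(R = 1 | U = u, X = x); (iii) P(W = w, X = x, R = 1) > 0 whenever P(W = w, X = x) > 0; (iv) completeness: for every x ∈ 𝒳 and every function g : 𝒰 → ℝ, if E[g(U) | W = w, X = x, R = 1] = 0 for every w with P(W = w, X = x, R = 1) > 0, then g(u) = 0 for every u with P(U = u, X = x, R = 1) > 0; (v) q : 𝒵 × 𝒳 → ℝ satisfies the observed equation P(R = 0 | W = w, X = x)/P(R = 1 | W = w, X = x) = E[ q(Z, X) | W = w, X = x, R = 1 ] for every (w, x) with P(W = w, X = x, R = 1) > 0. Then P(R = 0 | U = u, X = x)/P(R = 1 | U = u, X = x) = E[ q(Z, X) | U = u, X = x, R = 1 ] for every (u, x) with P(U = u, X = x, R = 1) > 0. -/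

import Mathlib

open Finset

noncomputable section

open scoped Classical

variable {Ω : Type*} [Fintype Ω]

/-- Probability of an event `A` under the weight function `p`. -/
def pr (p : Ω → ℝ) (A : Ω → Prop) : ℝ := ∑ ω, if A ω then p ω else 0

/-- Expectation of a real random variable `Y` under the weight function `p`. -/
def ex (p : Ω → ℝ) (Y : Ω → ℝ) : ℝ := ∑ ω, p ω * Y ω

/-- Conditional probability `P(A | B)`. -/
def cpr (p : Ω → ℝ) (A B : Ω → Prop) : ℝ := pr p (fun ω => A ω ∧ B ω) / pr p B

/-- Conditional expectation `E[Y | B]`. -/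
def cex (p : Ω → ℝ) (Y : Ω → ℝ) (B : Ω → Prop) : ℝ :=
  (∑ ω, if B ω then p ω * Y ω else 0) / pr p B


lemma pr_nonneg (p : Ω → ℝ) (hp : ∀ ω, 0 ≤ p ω) (A : Ω → Prop) : 0 ≤ pr p A :=
  Finset.sum_nonneg fun ω _ => by by_cases h : A ω <;> simp [pr, h, hp ω]

lemma pr_congr (p : Ω → ℝ) {A B : Ω → Prop} (h : ∀ ω, A ω ↔ B ω) : pr p A = pr p B :=
  Finset.sum_congr rfl fun ω _ => by simp [h ω]

lemma pr_mono (p : Ω → ℝ) (hp : ∀ ω, 0 ≤ p ω) {A B : Ω → Prop} (h : ∀ ω, A ω → B ω) :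
    pr p A ≤ pr p B :=
  Finset.sum_le_sum fun ω _ => by
    by_cases hA : A ω
    · simp [hA, h ω hA]
    · by_cases hB : B ω <;> simp [hA, hB, hp ω]

lemma pr_eq_zero_imp (p : Ω → ℝ) (hp : ∀ ω, 0 ≤ p ω) {B : Ω → Prop} (h : pr p B = 0) :
    ∀ ω, B ω → p ω = 0 := by
  intro ω hω
  have := (Finset.sum_eq_zero_iff_of_nonneg
    (fun ω _ => by by_cases h : B ω <;> simp [h, hp ω])).mp h ω (Finset.mem_univ ω)
  simpa [hω] using this

lemma pr_decomp {α : Type*} [Fintype α] (p : Ω → ℝ) (A : Ω → Prop) (V : Ω → α) :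
    pr p A = ∑ v, pr p (fun ω => A ω ∧ V ω = v) := by
  unfold pr
  rw [Finset.sum_comm]
  refine Finset.sum_congr rfl fun ω _ => ?_
  by_cases hA : A ω <;> simp [hA]

/-- Weighted sum over an event. -/
def wsum (p : Ω → ℝ) (f : Ω → ℝ) (A : Ω → Prop) : ℝ := ∑ ω, if A ω then p ω * f ω else 0

lemma cex_eq_wsum_div (p : Ω → ℝ) (f : Ω → ℝ) (A : Ω → Prop) :
    cex p f A = wsum p f A / pr p A := rfl

lemma wsum_congr (p f : Ω → ℝ) {A B : Ω → Prop} (h : ∀ ω, A ω ↔ B ω) :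
    wsum p f A = wsum p f B :=
  Finset.sum_congr rfl fun ω _ => by simp [h ω]

lemma wsum_decomp {α : Type*} [Fintype α] (p f : Ω → ℝ) (A : Ω → Prop) (V : Ω → α) :
    wsum p f A = ∑ v, wsum p f (fun ω => A ω ∧ V ω = v) := by
  unfold wsum
  rw [Finset.sum_comm]
  refine Finset.sum_congr rfl fun ω _ => ?_
  by_cases hA : A ω <;> simp [hA]

lemma wsum_const (p f : Ω → ℝ) (A : Ω → Prop) (c : ℝ) (h : ∀ ω, A ω → f ω = c) :
    wsum p f A = c * pr p A := by
  unfold wsum pr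
  rw [Finset.mul_sum]
  refine Finset.sum_congr rfl fun ω _ => ?_
  by_cases hA : A ω <;> simp [hA, h ω, mul_comm]

lemma wsum_zero (p f : Ω → ℝ) (A : Ω → Prop) (h : ∀ ω, A ω → p ω = 0) :
    wsum p f A = 0 :=
  Finset.sum_eq_zero fun ω _ => by
    by_cases hA : A ω <;> simp [hA, h ω]

lemma wsum_q {𝒵 𝒳 : Type*} [Fintype 𝒵] (p : Ω → ℝ) (Z : Ω → 𝒵) (X : Ω → 𝒳)
    (q : 𝒵 → 𝒳 → ℝ) (A : Ω → Prop) (x : 𝒳) (hA : ∀ ω, A ω → X ω = x) :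
    wsum p (fun ω => q (Z ω) (X ω)) A
      = ∑ z, q z x * pr p (fun ω => A ω ∧ Z ω = z) := by
  rw [wsum_decomp p (fun ω => q (Z ω) (X ω)) A Z]
  refine Finset.sum_congr rfl fun z _ => ?_
  exact wsum_const p (fun ω => q (Z ω) (X ω)) (fun ω => A ω ∧ Z ω = z) (q z x)
    (fun ω h => by
      show q (Z ω) (X ω) = q z x
      rw [h.2, hA ω h.1])

lemma factor1 {𝒳 𝒰 𝒵 𝒲 : Type*}
    (p : Ω → ℝ) (hp : ∀ ω, 0 ≤ p ω)
    (R : Ω → Bool) (X : Ω → 𝒳) (U : Ω → 𝒰) (Z : Ω → 𝒵) (W : Ω → 𝒲)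
    (hNC : ∀ (w : 𝒲) (z : 𝒵) (r : Bool) (u : 𝒰) (x : 𝒳),
      0 < pr p (fun ω => U ω = u ∧ X ω = x) →
      cpr p (fun ω => W ω = w ∧ (Z ω = z ∧ R ω = r)) (fun ω => U ω = u ∧ X ω = x)
        = cpr p (fun ω => W ω = w) (fun ω => U ω = u ∧ X ω = x)
          * cpr p (fun ω => Z ω = z ∧ R ω = r) (fun ω => U ω = u ∧ X ω = x))
    (w : 𝒲) (z : 𝒵) (r : Bool) (u : 𝒰) (x : 𝒳) :
    pr p (fun ω => (W ω = w ∧ X ω = x ∧ R ω = r ∧ U ω = u) ∧ Z ω = z)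
        * pr p (fun ω => U ω = u ∧ X ω = x)
      = pr p (fun ω => W ω = w ∧ U ω = u ∧ X ω = x)
          * pr p (fun ω => (U ω = u ∧ X ω = x ∧ R ω = r) ∧ Z ω = z) := by
  have e1 : pr p (fun ω => (W ω = w ∧ X ω = x ∧ R ω = r ∧ U ω = u) ∧ Z ω = z)
      = pr p (fun ω => (W ω = w ∧ (Z ω = z ∧ R ω = r)) ∧ (U ω = u ∧ X ω = x)) :=
    pr_congr p fun ω => by tauto
  have e2 : pr p (fun ω => W ω = w ∧ U ω = u ∧ X ω = x)
      = pr p (fun ω => W ω = w ∧ (U ω = u ∧ X ω = x)) := pr_congr p fun ω => by tauto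
  have e3 : pr p (fun ω => (U ω = u ∧ X ω = x ∧ R ω = r) ∧ Z ω = z)
      = pr p (fun ω => (Z ω = z ∧ R ω = r) ∧ (U ω = u ∧ X ω = x)) :=
    pr_congr p fun ω => by tauto
  rw [e1, e2, e3]
  rcases (pr_nonneg p hp (fun ω => U ω = u ∧ X ω = x)).lt_or_eq with ha | ha
  · have h := hNC w z r u x ha
    unfold cpr at h
    have hane : pr p (fun ω => U ω = u ∧ X ω = x) ≠ 0 := ne_of_gt ha
    field_simp at h
    nlinarith [h, ha]
  · have h0 : ∀ (A : Ω → Prop), (∀ ω, A ω → U ω = u ∧ X ω = x) → pr p A = 0 := by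
      intro A hA
      have := pr_mono p hp hA
      have := pr_nonneg p hp A
      linarith [ha]
    have hA : pr p (fun ω => (Z ω = z ∧ R ω = r) ∧ U ω = u ∧ X ω = x) = 0 :=
      h0 _ (fun ω h => h.2)
    rw [← ha, hA]
    ring

/-- Completeness upgrades the observed treatment bridge equation to the latent
treatment bridge equation (treatment-bridge completeness step in the proof of
Theorem 1). -/
theorem completeness_upgrades_treatment_bridge
    {𝒳 𝒰 𝒵 𝒲 : Type*} [Fintype 𝒳] [Fintype 𝒰] [Fintype 𝒵] [Fintype 𝒲]
    (p : Ω → ℝ) (hp : ∀ ω, 0 ≤ p ω) (hp1 : ∑ ω, p ω = 1)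
    (R : Ω → Bool) (X : Ω → 𝒳) (U : Ω → 𝒰) (Z : Ω → 𝒵) (W : Ω → 𝒲)
    (q : 𝒵 → 𝒳 → ℝ)
    -- (i) negative control assumption: W ⫫ (Z, R) | (U, X)
    (hNC : ∀ (w : 𝒲) (z : 𝒵) (r : Bool) (u : 𝒰) (x : 𝒳),
      0 < pr p (fun ω => U ω = u ∧ X ω = x) →
      cpr p (fun ω => W ω = w ∧ (Z ω = z ∧ R ω = r)) (fun ω => U ω = u ∧ X ω = x)
        = cpr p (fun ω => W ω = w) (fun ω => U ω = u ∧ X ω = x)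
          * cpr p (fun ω => Z ω = z ∧ R ω = r) (fun ω => U ω = u ∧ X ω = x))
    -- (ii) positivity of P(R = 1 | U, X)
    (hPosU : ∀ (u : 𝒰) (x : 𝒳), 0 < pr p (fun ω => U ω = u ∧ X ω = x) →
      0 < cpr p (fun ω => R ω = true) (fun ω => U ω = u ∧ X ω = x))
    -- (iii) positivity of P(W, X, R = 1)
    (hPosW : ∀ (w : 𝒲) (x : 𝒳), 0 < pr p (fun ω => W ω = w ∧ X ω = x) →
      0 < pr p (fun ω => W ω = w ∧ X ω = x ∧ R ω = true))
    -- (iv) completeness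
    (hComp : ∀ (x : 𝒳) (g : 𝒰 → ℝ),
      (∀ w : 𝒲, 0 < pr p (fun ω => W ω = w ∧ X ω = x ∧ R ω = true) →
        cex p (fun ω => g (U ω)) (fun ω => W ω = w ∧ X ω = x ∧ R ω = true) = 0) →
      ∀ u : 𝒰, 0 < pr p (fun ω => U ω = u ∧ X ω = x ∧ R ω = true) → g u = 0)
    -- (v) observed treatment bridge equation
    (hq : ∀ (w : 𝒲) (x : 𝒳), 0 < pr p (fun ω => W ω = w ∧ X ω = x ∧ R ω = true) →
      cpr p (fun ω => R ω = false) (fun ω => W ω = w ∧ X ω = x)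
          / cpr p (fun ω => R ω = true) (fun ω => W ω = w ∧ X ω = x)
        = cex p (fun ω => q (Z ω) (X ω)) (fun ω => W ω = w ∧ X ω = x ∧ R ω = true)) :
    ∀ (u : 𝒰) (x : 𝒳), 0 < pr p (fun ω => U ω = u ∧ X ω = x ∧ R ω = true) →
      cpr p (fun ω => R ω = false) (fun ω => U ω = u ∧ X ω = x)
          / cpr p (fun ω => R ω = true) (fun ω => U ω = u ∧ X ω = x)
        = cex p (fun ω => q (Z ω) (X ω)) (fun ω => U ω = u ∧ X ω = x ∧ R ω = true) := by
  intro u0 x hpos0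
  classical
  have prn : ∀ A : Ω → Prop, 0 ≤ pr p A := pr_nonneg p hp
  -- P(U=u, X=x, R=1) ≤ P(U=u, X=x)
  have hb1a : ∀ u : 𝒰, pr p (fun ω => U ω = u ∧ X ω = x ∧ R ω = true)
      ≤ pr p (fun ω => U ω = u ∧ X ω = x) :=
    fun u => pr_mono p hp (fun ω h => ⟨h.1, h.2.1⟩)
  -- positivity transfer
  have hapos : ∀ u : 𝒰, 0 < pr p (fun ω => U ω = u ∧ X ω = x) →
      0 < pr p (fun ω => U ω = u ∧ X ω = x ∧ R ω = true) := by
    intro u hau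
    have h := hPosU u x hau
    unfold cpr at h
    rcases div_pos_iff.mp h with ⟨h1, _⟩ | ⟨_, h2⟩
    · calc (0:ℝ) < pr p (fun ω => R ω = true ∧ U ω = u ∧ X ω = x) := h1
        _ = pr p (fun ω => U ω = u ∧ X ω = x ∧ R ω = true) := pr_congr p fun ω => by tauto
    · linarith
  -- summed factorization
  have F : ∀ (w : 𝒲) (r : Bool) (u : 𝒰),
      pr p (fun ω => W ω = w ∧ X ω = x ∧ R ω = r ∧ U ω = u)
          * pr p (fun ω => U ω = u ∧ X ω = x)
        = pr p (fun ω => W ω = w ∧ U ω = u ∧ X ω = x)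
            * pr p (fun ω => U ω = u ∧ X ω = x ∧ R ω = r) := by
    intro w r u
    rw [pr_decomp p (fun ω => W ω = w ∧ X ω = x ∧ R ω = r ∧ U ω = u) Z,
        pr_decomp p (fun ω => U ω = u ∧ X ω = x ∧ R ω = r) Z, Finset.sum_mul,
        Finset.mul_sum]
    exact Finset.sum_congr rfl fun z _ => factor1 p hp R X U Z W hNC w z r u x
  -- weighted summed factorization
  have FW : ∀ (w : 𝒲) (u : 𝒰),
      wsum p (fun ω => q (Z ω) (X ω)) (fun ω => W ω = w ∧ X ω = x ∧ R ω = true ∧ U ω = u)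
          * pr p (fun ω => U ω = u ∧ X ω = x)
        = pr p (fun ω => W ω = w ∧ U ω = u ∧ X ω = x)
            * wsum p (fun ω => q (Z ω) (X ω)) (fun ω => U ω = u ∧ X ω = x ∧ R ω = true) := by
    intro w u
    rw [wsum_q p Z X q (fun ω => W ω = w ∧ X ω = x ∧ R ω = true ∧ U ω = u) x
          (fun ω h => h.2.1),
        wsum_q p Z X q (fun ω => U ω = u ∧ X ω = x ∧ R ω = true) x (fun ω h => h.2.1),
        Finset.sum_mul, Finset.mul_sum]
    refine Finset.sum_congr rfl fun z _ => ?_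
    have h := factor1 p hp R X U Z W hNC w z true u x
    linear_combination q z x * h
  -- the bridge-difference function
  set g : 𝒰 → ℝ := fun u =>
    (wsum p (fun ω => q (Z ω) (X ω)) (fun ω => U ω = u ∧ X ω = x ∧ R ω = true)
        - pr p (fun ω => U ω = u ∧ X ω = x ∧ R ω = false))
      / pr p (fun ω => U ω = u ∧ X ω = x ∧ R ω = true) with hg
  -- key pointwise identity
  have key : ∀ (w : 𝒲) (u : 𝒰),
      g u * pr p (fun ω => W ω = w ∧ X ω = x ∧ R ω = true ∧ U ω = u)
        = wsum p (fun ω => q (Z ω) (X ω))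
            (fun ω => W ω = w ∧ X ω = x ∧ R ω = true ∧ U ω = u)
          - pr p (fun ω => W ω = w ∧ X ω = x ∧ R ω = false ∧ U ω = u) := by
    intro w u
    simp only [hg]
    rcases (prn (fun ω => U ω = u ∧ X ω = x ∧ R ω = true)).lt_or_eq with hb1 | hb1
    · have hau : 0 < pr p (fun ω => U ω = u ∧ X ω = x) := lt_of_lt_of_le hb1 (hb1a u)
      have F1 := F w true u
      have F2 := F w false u
      have F3 := FW w u
      rw [div_mul_eq_mul_div, div_eq_iff (ne_of_gt hb1)]
      apply mul_right_cancel₀ (ne_of_gt hau)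
      set sU := wsum p (fun ω => q (Z ω) (X ω)) (fun ω => U ω = u ∧ X ω = x ∧ R ω = true)
      set b0 := pr p (fun ω => U ω = u ∧ X ω = x ∧ R ω = false)
      set b1 := pr p (fun ω => U ω = u ∧ X ω = x ∧ R ω = true)
      set c1 := pr p (fun ω => W ω = w ∧ X ω = x ∧ R ω = true ∧ U ω = u)
      set c0 := pr p (fun ω => W ω = w ∧ X ω = x ∧ R ω = false ∧ U ω = u)
      set sW := wsum p (fun ω => q (Z ω) (X ω))
        (fun ω => W ω = w ∧ X ω = x ∧ R ω = true ∧ U ω = u)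
      set d := pr p (fun ω => W ω = w ∧ U ω = u ∧ X ω = x)
      set a := pr p (fun ω => U ω = u ∧ X ω = x)
      linear_combination (sU - b0) * F1 - b1 * F3 + b1 * F2
    · have hau : pr p (fun ω => U ω = u ∧ X ω = x) = 0 := by
        rcases (prn (fun ω => U ω = u ∧ X ω = x)).lt_or_eq with h | h
        · exact absurd (hapos u h) (by rw [← hb1]; exact lt_irrefl 0)
        · exact h.symm
      have hpe := pr_eq_zero_imp p hp hau
      have hsW : wsum p (fun ω => q (Z ω) (X ω))
          (fun ω => W ω = w ∧ X ω = x ∧ R ω = true ∧ U ω = u) = 0 :=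
        wsum_zero p _ _ (fun ω h => hpe ω ⟨h.2.2.2, h.2.1⟩)
      have hc0 : pr p (fun ω => W ω = w ∧ X ω = x ∧ R ω = false ∧ U ω = u) = 0 := by
        have h1 := pr_mono p hp
          (show ∀ ω, (W ω = w ∧ X ω = x ∧ R ω = false ∧ U ω = u) → (U ω = u ∧ X ω = x)
            from fun ω h => ⟨h.2.2.2, h.2.1⟩)
        have h2 := prn (fun ω => W ω = w ∧ X ω = x ∧ R ω = false ∧ U ω = u)
        linarith [hau]
      rw [hsW, hc0, ← hb1, div_zero, zero_mul]
      ring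
  -- the conditional expectation of g vanishes
  have hcex0 : ∀ w : 𝒲, 0 < pr p (fun ω => W ω = w ∧ X ω = x ∧ R ω = true) →
      cex p (fun ω => g (U ω)) (fun ω => W ω = w ∧ X ω = x ∧ R ω = true) = 0 := by
    intro w hm1
    rw [cex_eq_wsum_div]
    have hnum : wsum p (fun ω => g (U ω)) (fun ω => W ω = w ∧ X ω = x ∧ R ω = true)
        = wsum p (fun ω => q (Z ω) (X ω)) (fun ω => W ω = w ∧ X ω = x ∧ R ω = true)
          - pr p (fun ω => W ω = w ∧ X ω = x ∧ R ω = false) := by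
      rw [wsum_decomp p (fun ω => g (U ω)) (fun ω => W ω = w ∧ X ω = x ∧ R ω = true) U]
      have e : ∀ u : 𝒰, wsum p (fun ω => g (U ω))
          (fun ω => (W ω = w ∧ X ω = x ∧ R ω = true) ∧ U ω = u)
          = g u * pr p (fun ω => W ω = w ∧ X ω = x ∧ R ω = true ∧ U ω = u) := by
        intro u
        rw [wsum_const p (fun ω => g (U ω)) _ (g u) (fun ω h => by
          show g (U ω) = g u
          rw [h.2])]
        exact congrArg _ (pr_congr p fun ω => by tauto)
      calc ∑ u, wsum p (fun ω => g (U ω))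
            (fun ω => (W ω = w ∧ X ω = x ∧ R ω = true) ∧ U ω = u)
          = ∑ u, (wsum p (fun ω => q (Z ω) (X ω))
              (fun ω => W ω = w ∧ X ω = x ∧ R ω = true ∧ U ω = u)
            - pr p (fun ω => W ω = w ∧ X ω = x ∧ R ω = false ∧ U ω = u)) := by
            refine Finset.sum_congr rfl fun u _ => ?_
            rw [e u, key w u]
        _ = (∑ u, wsum p (fun ω => q (Z ω) (X ω))
              (fun ω => W ω = w ∧ X ω = x ∧ R ω = true ∧ U ω = u))
            - ∑ u, pr p (fun ω => W ω = w ∧ X ω = x ∧ R ω = false ∧ U ω = u) :=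
            Finset.sum_sub_distrib _ _
        _ = wsum p (fun ω => q (Z ω) (X ω)) (fun ω => W ω = w ∧ X ω = x ∧ R ω = true)
            - pr p (fun ω => W ω = w ∧ X ω = x ∧ R ω = false) := by
            rw [wsum_decomp p (fun ω => q (Z ω) (X ω))
                (fun ω => W ω = w ∧ X ω = x ∧ R ω = true) U,
              pr_decomp p (fun ω => W ω = w ∧ X ω = x ∧ R ω = false) U]
            congr 1
            · exact Finset.sum_congr rfl fun u _ => wsum_congr p _ (fun ω => by tauto)
            · exact Finset.sum_congr rfl fun u _ => pr_congr p (fun ω => by tauto)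
    have hobs := hq w x hm1
    unfold cpr at hobs
    rw [cex_eq_wsum_div] at hobs
    have c1 : pr p (fun ω => R ω = false ∧ W ω = w ∧ X ω = x)
        = pr p (fun ω => W ω = w ∧ X ω = x ∧ R ω = false) := pr_congr p fun ω => by tauto
    have c2 : pr p (fun ω => R ω = true ∧ W ω = w ∧ X ω = x)
        = pr p (fun ω => W ω = w ∧ X ω = x ∧ R ω = true) := pr_congr p fun ω => by tauto
    rw [c1, c2] at hobs
    have hmW : 0 < pr p (fun ω => W ω = w ∧ X ω = x) :=
      lt_of_lt_of_le hm1 (pr_mono p hp fun ω h => ⟨h.1, h.2.1⟩)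
    rw [div_div_div_comm, div_self (ne_of_gt hmW), div_one] at hobs
    rw [div_eq_div_iff (ne_of_gt hm1) (ne_of_gt hm1)] at hobs
    have hm0 : pr p (fun ω => W ω = w ∧ X ω = x ∧ R ω = false)
        = wsum p (fun ω => q (Z ω) (X ω)) (fun ω => W ω = w ∧ X ω = x ∧ R ω = true) :=
      mul_right_cancel₀ (ne_of_gt hm1) hobs
    rw [hnum, hm0, sub_self, zero_div]
  -- completeness
  have hg0 : g u0 = 0 := hComp x g hcex0 u0 hpos0
  have hb1pos0 : 0 < pr p (fun ω => U ω = u0 ∧ X ω = x ∧ R ω = true) := hpos0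
  have hau0 : 0 < pr p (fun ω => U ω = u0 ∧ X ω = x) := lt_of_lt_of_le hpos0 (hb1a u0)
  have hsb : wsum p (fun ω => q (Z ω) (X ω)) (fun ω => U ω = u0 ∧ X ω = x ∧ R ω = true)
      = pr p (fun ω => U ω = u0 ∧ X ω = x ∧ R ω = false) := by
    have hgv := hg0
    rw [hg] at hgv
    simp only [] at hgv
    rcases div_eq_zero_iff.mp hgv with h | h
    · linarith [sub_eq_zero.mp h]
    · exact absurd h (ne_of_gt hb1pos0)
  unfold cpr
  rw [cex_eq_wsum_div]
  have c1 : pr p (fun ω => R ω = false ∧ U ω = u0 ∧ X ω = x)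
      = pr p (fun ω => U ω = u0 ∧ X ω = x ∧ R ω = false) := pr_congr p fun ω => by tauto
  have c2 : pr p (fun ω => R ω = true ∧ U ω = u0 ∧ X ω = x)
      = pr p (fun ω => U ω = u0 ∧ X ω = x ∧ R ω = true) := pr_congr p fun ω => by tauto
  rw [c1, c2, div_div_div_comm, div_self (ne_of_gt hau0), div_one, hsb]
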